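/- Let X, Y ∈ ℝ^{N×N} be symmetric matrices and let A, B ∈ ℝ^{N×N} be arbitrary. Then the sum over all pairs (i,j) with 1 ≤ i < j ≤ N of tr[(ℰ_{ij}X − Xℰ_{ij})A] · tr[(ℰ_{ij}Y − Yℰ_{ij})B] equals 4·⟨𝒜(𝒮(A)X), 𝒜(𝒮(B)Y)⟩_F. -/

import Mathlib

open Matrix BigOperators

/-- `ℰ_{ij} = (√2/2)(E_{ij} − E_{ji})` where `E_{ij}` is the matrix with a `1`
in entry `(i,j)` and `0` elsewhere. -/
noncomputable def calE (N : ℕ) (i j : Fin N) : Matrix (Fin N) (Fin N) ℝ :=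
  (Real.sqrt 2 / 2) • (Matrix.single i j (1 : ℝ) - Matrix.single j i (1 : ℝ))

/-- The Frobenius inner product `⟨A,B⟩_F = tr(Aᵀ B)`. -/
noncomputable def frob {N r : ℕ} (A B : Matrix (Fin N) (Fin r) ℝ) : ℝ := (Aᵀ * B).trace

/-- The symmetrization `𝒮(A) = (A + Aᵀ)/2`. -/
noncomputable def symPart {N : ℕ} (A : Matrix (Fin N) (Fin N) ℝ) : Matrix (Fin N) (Fin N) ℝ :=
  (1 / 2 : ℝ) • (A + Aᵀ)

/-- The skew-symmetrization `𝒜(A) = (A − Aᵀ)/2`. -/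
noncomputable def skewPart {N : ℕ} (A : Matrix (Fin N) (Fin N) ℝ) : Matrix (Fin N) (Fin N) ℝ :=
  (1 / 2 : ℝ) • (A - Aᵀ)

/-!
Moving `X` around the trace turns `tr[(ℰ_{ij}X − Xℰ_{ij})A]` into `tr[ℰ_{ij}(XA − AX)]`, and pairing
with `ℰ_{ij}` reads off `−√2` times the `(i,j)` entry of the skew part. For symmetric `X`,
`𝒜(XA − AX) = −2 𝒜(𝒮(A)X)`, so each summand is `8 P_{ij} Q_{ij}` with `P, Q` the two skew parts.
As `P_{ij} Q_{ij}` is symmetric in `(i,j)` with zero diagonal, the sum over `i < j` is half of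
`⟨P, Q⟩_F`.
-/

theorem Matrix.trace_commutator_mul {n R : Type*} [Fintype n] [CommRing R]
    (E X A : Matrix n n R) : ((E * X - X * E) * A).trace = (E * (X * A - A * X)).trace := by
  rw [Matrix.sub_mul, Matrix.mul_sub, trace_sub, trace_sub, Matrix.mul_assoc, Matrix.mul_assoc,
    trace_mul_comm X, Matrix.mul_assoc]

theorem Finset.sum_sum_ite_lt_of_symm {ι R : Type*} [Fintype ι] [LinearOrder ι]
    [NonAssocSemiring R] (f : ι → ι → R) (hsymm : ∀ i j, f j i = f i j) (hdiag : ∀ i, f i i = 0) :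
    ∑ i, ∑ j, f i j = 2 * ∑ i, ∑ j, if i < j then f i j else 0 := by
  have hsplit : ∀ i j, f i j = (if i < j then f i j else 0) + if j < i then f j i else 0 := by
    intro i j
    rcases lt_trichotomy i j with h | rfl | h
    · simp [h, h.not_gt]
    · simp [hdiag]
    · simp [h, h.not_gt, hsymm]
  simp_rw [two_mul, Finset.sum_congr rfl fun i _ => Finset.sum_congr rfl fun j _ => hsplit i j,
    Finset.sum_add_distrib]
  rw [Finset.sum_comm (f := fun i j => if j < i then f j i else 0)]

lemma skewPart_apply_swap {N : ℕ} (M : Matrix (Fin N) (Fin N) ℝ) (i j : Fin N) :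
    skewPart M j i = -skewPart M i j := by
  simp only [skewPart, Matrix.smul_apply, Matrix.sub_apply, transpose_apply, smul_eq_mul]
  ring

lemma trace_calE_mul {N : ℕ} (i j : Fin N) (M : Matrix (Fin N) (Fin N) ℝ) :
    (calE N i j * M).trace = -Real.sqrt 2 * skewPart M i j := by
  simp only [calE, Matrix.smul_mul, Matrix.sub_mul, trace_smul, trace_sub, trace_single_mul,
    skewPart, Matrix.smul_apply, Matrix.sub_apply, transpose_apply, smul_eq_mul]
  ring

lemma skewPart_mul_sub_mul {N : ℕ} {X : Matrix (Fin N) (Fin N) ℝ} (hX : Xᵀ = X)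
    (A : Matrix (Fin N) (Fin N) ℝ) :
    skewPart (X * A - A * X) = (-2 : ℝ) • skewPart (symPart A * X) := by
  simp only [skewPart, symPart, transpose_sub, transpose_mul, transpose_smul, transpose_add,
    transpose_transpose, hX, Matrix.smul_mul, Matrix.add_mul]
  module

lemma trace_commutator_calE_mul {N : ℕ} {X : Matrix (Fin N) (Fin N) ℝ} (hX : Xᵀ = X)
    (A : Matrix (Fin N) (Fin N) ℝ) (i j : Fin N) :
    ((calE N i j * X - X * calE N i j) * A).trace
      = 2 * Real.sqrt 2 * skewPart (symPart A * X) i j := by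
  rw [Matrix.trace_commutator_mul, trace_calE_mul, skewPart_mul_sub_mul hX, Matrix.smul_apply,
    smul_eq_mul]
  ring

lemma frob_eq_sum {N r : ℕ} (P Q : Matrix (Fin N) (Fin r) ℝ) :
    frob P Q = ∑ i, ∑ j, P i j * Q i j := by
  simp only [frob, trace, diag, mul_apply, transpose_apply]
  exact Finset.sum_comm

lemma frob_skewPart_eq_two_mul_sum_lt {N : ℕ} (M M' : Matrix (Fin N) (Fin N) ℝ) :
    frob (skewPart M) (skewPart M')
      = 2 * ∑ i, ∑ j, if i < j then skewPart M i j * skewPart M' i j else 0 := by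
  rw [frob_eq_sum]
  refine Finset.sum_sum_ite_lt_of_symm _ (fun i j => ?_) (fun i => ?_)
  · rw [skewPart_apply_swap M, skewPart_apply_swap M']
    ring
  · have := skewPart_apply_swap M i i
    rw [show skewPart M i i = 0 by linarith, zero_mul]

theorem stmt_9 (N : ℕ) (X Y A B : Matrix (Fin N) (Fin N) ℝ)
    (hX : Xᵀ = X) (hY : Yᵀ = Y) :
    ∑ i : Fin N, ∑ j : Fin N,
      (if i < j then
        ((calE N i j * X - X * calE N i j) * A).trace *
        ((calE N i j * Y - Y * calE N i j) * B).trace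
      else 0)
      = 4 * frob (skewPart (symPart A * X)) (skewPart (symPart B * Y)) := by
  have hsqrt : Real.sqrt 2 * Real.sqrt 2 = 2 := Real.mul_self_sqrt zero_le_two
  simp_rw [trace_commutator_calE_mul hX, trace_commutator_calE_mul hY,
    frob_skewPart_eq_two_mul_sum_lt, Finset.mul_sum, mul_ite_zero]
  refine Finset.sum_congr rfl fun i _ => Finset.sum_congr rfl fun j _ => ?_
  split_ifs
  · linear_combination (4 * skewPart (symPart A * X) i j * skewPart (symPart B * Y) i j) * hsqrt
  · rfl
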